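/- With J(I) the CA-ML instance constructed from a restricted SMTI instance I as described, I admits a complete weakly stable matching if and only if J(I) admits a student-complete coalition-stable matching. -/
import Mathlib

open Finset

/-- An instance of the Course Allocation problem: students `S`, courses `C`,
mutual acceptability `acc`, strict preferences of students over (acceptable) courses
and of courses over (acceptable) students, positive credits, upper quotas and credit limits. -/
structure CA (S C : Type*) where
  acc : S → C → Prop
  sPref : S → C → C → Prop
  cPref : C → S → S → Prop
  credits : C → ℚ
  quota : C → ℕ
  limit : S → ℚ
  credits_pos : ∀ c, 0 < credits c
  sPref_irrefl : ∀ s c, ¬ sPref s c c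
  sPref_trans : ∀ s c₁ c₂ c₃, sPref s c₁ c₂ → sPref s c₂ c₃ → sPref s c₁ c₃
  sPref_total : ∀ s c₁ c₂, acc s c₁ → acc s c₂ → c₁ ≠ c₂ → sPref s c₁ c₂ ∨ sPref s c₂ c₁
  cPref_irrefl : ∀ c s, ¬ cPref c s s
  cPref_trans : ∀ c s₁ s₂ s₃, cPref c s₁ s₂ → cPref c s₂ s₃ → cPref c s₁ s₃
  cPref_total : ∀ c s₁ s₂, acc s₁ c → acc s₂ c → s₁ ≠ s₂ → cPref c s₁ s₂ ∨ cPref c s₂ s₁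

section CourseAllocation

variable {S C : Type*} [DecidableEq S] [DecidableEq C]

/-- The set `C_M(s)` of courses assigned to student `s` in assignment `M`. -/
def CM (M : Finset (S × C)) (s : S) : Finset C :=
  (M.filter fun p => p.1 = s).image Prod.snd

/-- The set `S_M(c)` of students assigned to course `c` in assignment `M`. -/
def SM (M : Finset (S × C)) (c : C) : Finset S :=
  (M.filter fun p => p.2 = c).image Prod.fst

/-- The total number of credits `O(D)` of a set of courses `D`. -/
def CA.O (I : CA S C) (D : Finset C) : ℚ := ∑ c ∈ D, I.credits c

/-- `M` is a matching: all pairs acceptable, credit limits and upper quotas respected. -/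
def CA.IsMatching (I : CA S C) (M : Finset (S × C)) : Prop :=
  (∀ p ∈ M, I.acc p.1 p.2) ∧
  (∀ s, I.O (CM M s) ≤ I.limit s) ∧
  (∀ c, (SM M c).card ≤ I.quota c)

/-- Feasibility of a matching with respect to families `F` of feasible course sets. -/
def Feasible (F : S → Set (Finset C)) (M : Finset (S × C)) : Prop :=
  ∀ s, CM M s ∈ F s

/-- `F` is a family of downward-feasible constraints: every feasible set consists of
acceptable courses, and subsets of feasible sets are feasible. -/
def CA.DownwardFeasible (I : CA S C) (F : S → Set (Finset C)) : Prop :=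
  (∀ s, ∀ D ∈ F s, ∀ c ∈ D, I.acc s c) ∧
  (∀ s, ∀ D ∈ F s, ∀ D' ⊆ D, D' ∈ F s)

/-- Absent downward-feasible constraints (every set of courses feasible). -/
def noF : S → Set (Finset C) := fun _ => Set.univ

/-- Condition (1) of all blocking definitions: course `c` is undersubscribed in `M`
or prefers `s` to one of its assigned students. -/
def CA.Wants (I : CA S C) (M : Finset (S × C)) (s : S) (c : C) : Prop :=
  (SM M c).card < I.quota c ∨ ∃ s' ∈ SM M c, I.cPref c s s'

/-- `(s, c)` is a blocking pair of `M` (w.r.t. feasibility constraints `F`). -/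
def CA.BlockingPair (I : CA S C) (F : S → Set (Finset C)) (M : Finset (S × C))
    (s : S) (c : C) : Prop :=
  I.acc s c ∧ (s, c) ∉ M ∧ I.Wants M s c ∧
  ∃ D ⊆ CM M s, (∀ c' ∈ D, I.sPref s c c') ∧
    I.O (CM M s) - I.O D + I.credits c ≤ I.limit s ∧
    (CM M s \ D) ∪ {c} ∈ F s

def CA.PairStable (I : CA S C) (F : S → Set (Finset C)) (M : Finset (S × C)) : Prop :=
  ∀ s c, ¬ I.BlockingPair F M s c

/-- `(s, c)` is a size-blocking pair of `M`: like a blocking pair, but additionally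
the dropped set `D` must satisfy `O(D) ≤ O(c)`. -/
def CA.SizeBlockingPair (I : CA S C) (F : S → Set (Finset C)) (M : Finset (S × C))
    (s : S) (c : C) : Prop :=
  I.acc s c ∧ (s, c) ∉ M ∧ I.Wants M s c ∧
  ∃ D ⊆ CM M s, (∀ c' ∈ D, I.sPref s c c') ∧ I.O D ≤ I.credits c ∧
    I.O (CM M s) - I.O D + I.credits c ≤ I.limit s ∧
    (CM M s \ D) ∪ {c} ∈ F s

def CA.PairSizeStable (I : CA S C) (F : S → Set (Finset C)) (M : Finset (S × C)) : Prop :=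
  ∀ s c, ¬ I.SizeBlockingPair F M s c

/-- `(s, B)` is a blocking coalition of `M`. -/
def CA.BlockingCoalition (I : CA S C) (F : S → Set (Finset C)) (M : Finset (S × C))
    (s : S) (B : Finset C) : Prop :=
  B.Nonempty ∧ (∀ c ∈ B, I.acc s c ∧ (s, c) ∉ M) ∧ (∀ c ∈ B, I.Wants M s c) ∧
  ∃ D ⊆ CM M s, (∀ c ∈ B, ∀ c' ∈ D, I.sPref s c c') ∧ I.O D ≤ I.O B ∧
    I.O (CM M s) - I.O D + I.O B ≤ I.limit s ∧
    (CM M s \ D) ∪ B ∈ F s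

def CA.CoalitionStable (I : CA S C) (F : S → Set (Finset C)) (M : Finset (S × C)) : Prop :=
  ∀ s B, ¬ I.BlockingCoalition F M s B

/-- `(s, B)` is a first-blocking coalition of `M`: as a blocking coalition, except that
`s` need only prefer her most-preferred course of `B` to her most-preferred course of `D`
(equivalently, some course of `B` is preferred to every course of `D`; vacuous if `D = ∅`). -/
def CA.FirstBlockingCoalition (I : CA S C) (F : S → Set (Finset C)) (M : Finset (S × C))
    (s : S) (B : Finset C) : Prop :=
  B.Nonempty ∧ (∀ c ∈ B, I.acc s c ∧ (s, c) ∉ M) ∧ (∀ c ∈ B, I.Wants M s c) ∧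
  ∃ D ⊆ CM M s, (∃ b ∈ B, ∀ c' ∈ D, I.sPref s b c') ∧ I.O D ≤ I.O B ∧
    I.O (CM M s) - I.O D + I.O B ≤ I.limit s ∧
    (CM M s \ D) ∪ B ∈ F s

def CA.FirstCoalitionStable (I : CA S C) (F : S → Set (Finset C)) (M : Finset (S × C)) : Prop :=
  ∀ s B, ¬ I.FirstBlockingCoalition F M s B

/-- Every course exactly fills its upper quota. -/
def CA.CourseComplete (I : CA S C) (M : Finset (S × C)) : Prop :=
  ∀ c, (SM M c).card = I.quota c

/-- Every student takes as many credits as her credit limit. -/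
def CA.StudentComplete (I : CA S C) (M : Finset (S × C)) : Prop :=
  ∀ s, I.O (CM M s) = I.limit s

/-- The size of a matching: total number of credits taken by all students. -/
def CA.size [Fintype S] (I : CA S C) (M : Finset (S × C)) : ℚ :=
  ∑ s : S, I.O (CM M s)

/-- `ml` is a master list of students for the instance `I`: a strict total order on
students with which every course's preferences are consistent. -/
def CA.MasterList (I : CA S C) (ml : S → S → Prop) : Prop :=
  (∀ s, ¬ ml s s) ∧ (∀ s₁ s₂ s₃, ml s₁ s₂ → ml s₂ s₃ → ml s₁ s₃) ∧
  (∀ s₁ s₂, s₁ ≠ s₂ → ml s₁ s₂ ∨ ml s₂ s₁) ∧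
  (∀ c s s', I.acc s c → I.acc s' c → (I.cPref c s s' ↔ ml s s'))

end CourseAllocation
/-- Builds a `CA` instance from rank functions (smaller rank = more preferred), with a fixed
injective tie-breaking that never fires when ranks are distinct on acceptable pairs. -/
def CA.ofRanks {S C : Type*} (acc : S → C → Prop) (srank : S → C → ℕ) (crank : C → S → ℕ)
    (iS : S → ℕ) (iC : C → ℕ) (hiS : Function.Injective iS) (hiC : Function.Injective iC)
    (credits : C → ℚ) (quota : C → ℕ) (limit : S → ℚ) (hpos : ∀ c, 0 < credits c) :
    CA S C where
  acc := acc
  sPref s c c' := acc s c ∧ acc s c' ∧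
    (srank s c < srank s c' ∨ (srank s c = srank s c' ∧ iC c < iC c'))
  cPref c s s' := acc s c ∧ acc s' c ∧
    (crank c s < crank c s' ∨ (crank c s = crank c s' ∧ iS s < iS s'))
  credits := credits
  quota := quota
  limit := limit
  credits_pos := hpos
  sPref_irrefl := by rintro s c ⟨-, -, h⟩; omega
  sPref_trans := by rintro s c₁ c₂ c₃ ⟨h1, -, ha⟩ ⟨-, h2, hb⟩; exact ⟨h1, h2, by omega⟩
  sPref_total := by
    intro s c₁ c₂ h1 h2 hne
    have hi : iC c₁ ≠ iC c₂ := fun h => hne (hiC h)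
    rcases Nat.lt_trichotomy (srank s c₁) (srank s c₂) with h | h | h
    · exact Or.inl ⟨h1, h2, Or.inl h⟩
    · rcases Nat.lt_or_ge (iC c₁) (iC c₂) with h' | h'
      · exact Or.inl ⟨h1, h2, Or.inr ⟨h, h'⟩⟩
      · exact Or.inr ⟨h2, h1, Or.inr ⟨h.symm, by omega⟩⟩
    · exact Or.inr ⟨h2, h1, Or.inl h⟩
  cPref_irrefl := by rintro c s ⟨-, -, h⟩; omega
  cPref_trans := by rintro c s₁ s₂ s₃ ⟨h1, -, ha⟩ ⟨-, h2, hb⟩; exact ⟨h1, h2, by omega⟩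
  cPref_total := by
    intro c s₁ s₂ h1 h2 hne
    have hi : iS s₁ ≠ iS s₂ := fun h => hne (hiS h)
    rcases Nat.lt_trichotomy (crank c s₁) (crank c s₂) with h | h | h
    · exact Or.inl ⟨h1, h2, Or.inl h⟩
    · rcases Nat.lt_or_ge (iS s₁) (iS s₂) with h' | h'
      · exact Or.inl ⟨h1, h2, Or.inr ⟨h, h'⟩⟩
      · exact Or.inr ⟨h2, h1, Or.inr ⟨h.symm, by omega⟩⟩
    · exact Or.inr ⟨h2, h1, Or.inl h⟩
/-- A restricted SMTI instance: `n` men and `n` women (both indexed by `Fin n`), with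
mutual acceptability `acc m w`, a strict master list of men given by the injective
ranking `mrank`, and a master list of women with ties given by the ranking `wrank`,
where ties (classes of equal `wrank`) have length at most 2, encoded by the tie-partner
involution `twin` (`twin j = j` exactly when `w_j` is not in a tie).  Every agent's
preference list is the restriction of the other side's master list to her/his
acceptable set. -/
structure RSMTI (n : ℕ) where
  acc : Fin n → Fin n → Prop
  mrank : Fin n → Fin n
  mrank_inj : Function.Injective mrank
  wrank : Fin n → ℕ
  twin : Fin n → Fin n
  twin_invol : ∀ j, twin (twin j) = j
  wrank_eq_iff : ∀ j k, wrank j = wrank k ↔ (k = j ∨ k = twin j)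

/-- `σ` is a complete weakly stable matching of the restricted SMTI instance `I`:
it is a bijection between men and women along acceptable pairs, and no acceptable
pair `(m, w)` exists where both `m` and `w` strictly prefer each other to their
partners (men's preferences come from the women's master list `wrank`, women's
preferences from the men's master list `mrank`). -/
def RSMTI.CompleteWeaklyStable {n : ℕ} (I : RSMTI n) (σ : Equiv.Perm (Fin n)) : Prop :=
  (∀ m, I.acc m (σ m)) ∧
  ∀ m w, ¬ (I.acc m w ∧ σ m ≠ w ∧
    I.wrank w < I.wrank (σ m) ∧ I.mrank m < I.mrank (σ.symm w))

/-- Woman `w_j` is tied in the women's master list and is the designated member of her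
tie (the one whose course gets 1 credit, together with a twin 1-credit course). -/
def RSMTI.des {n : ℕ} (I : RSMTI n) (j : Fin n) : Prop :=
  I.twin j ≠ j ∧ j < I.twin j

instance {n : ℕ} (I : RSMTI n) (j : Fin n) : Decidable (I.des j) :=
  inferInstanceAs (Decidable (I.twin j ≠ j ∧ j < I.twin j))
/-- Acceptability in `J(I)`: student `m` finds course `c_j = Sum.inl j` acceptable iff
`m` finds `w_j` acceptable; the twin course `c_j' = Sum.inr j` exists (has the same
preference list as `c_j`) only when `w_j` is the designated member of a tie. -/
def RSMTI.Jacc {n : ℕ} (I : RSMTI n) (m : Fin n) : Fin n ⊕ Fin n → Prop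
  | .inl j => I.acc m j
  | .inr j => I.des j ∧ I.acc m j

/-- Credits in `J(I)`: a non-designated woman's course has 2 credits, a designated
woman's course `c_j` and its twin `c_j'` have 1 credit each. -/
def RSMTI.Jcredits {n : ℕ} (I : RSMTI n) : Fin n ⊕ Fin n → ℚ
  | .inl j => if I.des j then 1 else 2
  | .inr _ => 1

/-- Upper quotas in `J(I)`: every course has upper quota 1; the twin slot `Sum.inr j`
of a non-designated woman is a phantom course with quota 0 (acceptable to nobody). -/
def RSMTI.Jquota {n : ℕ} (I : RSMTI n) : Fin n ⊕ Fin n → ℕ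
  | .inl _ => 1
  | .inr j => if I.des j then 1 else 0

/-- The rank of a course in the master list of courses of `J(I)`: the women's master
list with each untied `w_j` replaced by `c_j` and each tie `{w_k, w_l}` (with `w_k`
designated) replaced by `c_k ≻ c_l ≻ c_k'`.  All students rank courses accordingly. -/
def RSMTI.Jrank {n : ℕ} (I : RSMTI n) : Fin n ⊕ Fin n → ℕ
  | .inl j => 3 * I.wrank j + (if I.des j then 0 else if I.twin j ≠ j then 1 else 0)
  | .inr j => 3 * I.wrank j + 2

/-- The CA-ML instance `J(I)` built from the restricted SMTI instance `I`: each man `m_i`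
becomes a student `s_i` with credit limit 2; each woman `w_j` becomes a course `c_j`
(plus a twin `c_j'` when `w_j` is a designated tied woman) as described; students rank
courses by the course master list `Jrank` and courses rank students by the men's
master list `mrank`. -/
def RSMTI.J {n : ℕ} (I : RSMTI n) : CA (Fin n) (Fin n ⊕ Fin n) :=
  CA.ofRanks (fun m c => I.Jacc m c)
    (fun _ c => I.Jrank c)
    (fun _ m => (I.mrank m : ℕ))
    Encodable.encode Encodable.encode Encodable.encode_injective Encodable.encode_injective
    I.Jcredits I.Jquota (fun _ => 2)
    (by
      rintro (j | j)
      · show (0 : ℚ) < (if I.des j then 1 else 2); split <;> norm_num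
      · show (0 : ℚ) < 1; norm_num)
section Helpers

variable {S C : Type*} [DecidableEq S] [DecidableEq C]

lemma mem_CM' {M : Finset (S × C)} {s : S} {c : C} : c ∈ CM M s ↔ (s, c) ∈ M := by
  constructor
  · intro h
    simp only [CM, Finset.mem_image, Finset.mem_filter] at h
    obtain ⟨⟨a, b⟩, ⟨hm, h1⟩, h2⟩ := h
    simp only at h1 h2; subst h1; subst h2; exact hm
  · intro h
    simp only [CM, Finset.mem_image, Finset.mem_filter]
    exact ⟨(s, c), ⟨h, rfl⟩, rfl⟩

lemma mem_SM' {M : Finset (S × C)} {s : S} {c : C} : s ∈ SM M c ↔ (s, c) ∈ M := by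
  constructor
  · intro h
    simp only [SM, Finset.mem_image, Finset.mem_filter] at h
    obtain ⟨⟨a, b⟩, ⟨hm, h1⟩, h2⟩ := h
    simp only at h1 h2; subst h1; subst h2; exact hm
  · intro h
    simp only [SM, Finset.mem_image, Finset.mem_filter]
    exact ⟨(s, c), ⟨h, rfl⟩, rfl⟩

end Helpers

namespace RSMTI

variable {n : ℕ} (I : RSMTI n)

lemma Jacc_acc {m : Fin n} {c : Fin n ⊕ Fin n} (h : I.Jacc m c) :
    I.acc m (Sum.elim id id c) := by
  cases c with
  | inl j => exact h
  | inr j => exact h.2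

lemma des_inr {m : Fin n} {j : Fin n} (h : I.Jacc m (Sum.inr j)) : I.des j := h.1

lemma wrank_twin (j : Fin n) : I.wrank (I.twin j) = I.wrank j :=
  ((I.wrank_eq_iff j (I.twin j)).2 (Or.inr rfl)).symm

lemma not_des_twin {j : Fin n} (h : I.des j) : ¬ I.des (I.twin j) := by
  rintro ⟨-, h2⟩
  rw [I.twin_invol] at h2
  exact absurd (h2.trans h.2) (lt_irrefl _)

lemma des_twin_of_ne {j : Fin n} (h1 : I.twin j ≠ j) (h2 : ¬ I.des j) : I.des (I.twin j) := by
  refine ⟨by rw [I.twin_invol]; exact fun h => h1 h.symm, ?_⟩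
  rw [I.twin_invol]
  rcases lt_or_gt_of_ne h1 with h | h
  · exact h
  · exact absurd ⟨h1, h⟩ h2

lemma eq_or_eq_twin_of_wrank_eq {j k : Fin n} (h : I.wrank j = I.wrank k) :
    k = j ∨ k = I.twin j := (I.wrank_eq_iff j k).1 h

lemma J_acc : I.J.acc = fun m c => I.Jacc m c := rfl
lemma J_credits : I.J.credits = I.Jcredits := rfl
lemma J_quota : I.J.quota = I.Jquota := rfl
lemma J_limit : I.J.limit = fun _ => (2 : ℚ) := rfl

lemma Jcredits_inl_des {j : Fin n} (h : I.des j) : I.Jcredits (Sum.inl j) = 1 := by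
  simp [Jcredits, h]

lemma Jcredits_inl_not_des {j : Fin n} (h : ¬ I.des j) : I.Jcredits (Sum.inl j) = 2 := by
  simp [Jcredits, h]

lemma one_le_Jcredits (c : Fin n ⊕ Fin n) : 1 ≤ I.Jcredits c := by
  cases c with
  | inl j => simp only [Jcredits]; split <;> norm_num
  | inr j => norm_num [Jcredits]

lemma Jcredits_eq_one_or_two (c : Fin n ⊕ Fin n) :
    I.Jcredits c = 1 ∨ I.Jcredits c = 2 := by
  cases c with
  | inl j =>
    simp only [Jcredits]; split
    · exact Or.inl rfl
    · exact Or.inr rfl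
  | inr j => exact Or.inl rfl

end RSMTI
namespace RSMTI

variable {n : ℕ} (I : RSMTI n)

lemma Joff_le_one (j : Fin n) :
    (if I.des j then 0 else if I.twin j ≠ j then 1 else 0) ≤ 1 := by
  split <;> [norm_num; split <;> norm_num]

lemma Jrank_inl (j : Fin n) :
    I.Jrank (Sum.inl j) = 3 * I.wrank j + (if I.des j then 0 else if I.twin j ≠ j then 1 else 0) :=
  rfl

lemma Jrank_inr (j : Fin n) : I.Jrank (Sum.inr j) = 3 * I.wrank j + 2 := rfl

lemma Jrank_inj {m m' : Fin n} {c c' : Fin n ⊕ Fin n} (h : I.Jacc m c) (h' : I.Jacc m' c')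
    (he : I.Jrank c = I.Jrank c') : c = c' := by
  cases c with
  | inl j =>
    cases c' with
    | inl k =>
      rw [Jrank_inl, Jrank_inl] at he
      have hj := I.Joff_le_one j
      have hk := I.Joff_le_one k
      have hw : I.wrank j = I.wrank k := by omega
      rcases I.eq_or_eq_twin_of_wrank_eq hw with rfl | rfl
      · rfl
      · by_cases htj : I.twin j = j
        · rw [htj]
        · exfalso
          have hwt := I.wrank_twin j
          by_cases hd : I.des j
          · have hd' := I.not_des_twin hd
            have ht' : I.twin (I.twin j) ≠ I.twin j := by
              rw [I.twin_invol]; exact fun hh => htj hh.symm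
            rw [if_pos hd, if_neg hd', if_pos ht', hwt] at he
            omega
          · have hd' := I.des_twin_of_ne htj hd
            rw [if_neg hd, if_pos hd', if_pos htj, hwt] at he
            omega
    | inr k =>
      rw [Jrank_inl, Jrank_inr] at he
      have hj := I.Joff_le_one j
      omega
  | inr j =>
    cases c' with
    | inl k =>
      rw [Jrank_inr, Jrank_inl] at he
      have hk := I.Joff_le_one k
      omega
    | inr k =>
      rw [Jrank_inr, Jrank_inr] at he
      have hw : I.wrank j = I.wrank k := by omega
      rcases I.eq_or_eq_twin_of_wrank_eq hw with rfl | rfl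
      · rfl
      · exact absurd (I.des_inr h') (I.not_des_twin (I.des_inr h))

lemma sPref_iff {m : Fin n} {c c' : Fin n ⊕ Fin n} :
    I.J.sPref m c c' ↔ I.Jacc m c ∧ I.Jacc m c' ∧ I.Jrank c < I.Jrank c' := by
  constructor
  · rintro ⟨h1, h2, h3 | ⟨he, hlt⟩⟩
    · exact ⟨h1, h2, h3⟩
    · cases I.Jrank_inj h1 h2 he
      exact absurd hlt (lt_irrefl _)
  · rintro ⟨h1, h2, h3⟩
    exact ⟨h1, h2, Or.inl h3⟩

lemma cPref_iff {c : Fin n ⊕ Fin n} {m m' : Fin n} :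
    I.J.cPref c m m' ↔ I.Jacc m c ∧ I.Jacc m' c ∧ I.mrank m < I.mrank m' := by
  constructor
  · rintro ⟨h1, h2, h3 | ⟨he, hlt⟩⟩
    · exact ⟨h1, h2, h3⟩
    · cases I.mrank_inj (Fin.val_injective he)
      exact absurd hlt (lt_irrefl _)
  · rintro ⟨h1, h2, h3⟩
    exact ⟨h1, h2, Or.inl h3⟩

end RSMTI
namespace RSMTI

variable {n : ℕ} (I : RSMTI n)

lemma Jcredits_nonneg (c : Fin n ⊕ Fin n) : 0 ≤ I.Jcredits c :=
  le_trans zero_le_one (I.one_le_Jcredits c)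

lemma O_singleton (c : Fin n ⊕ Fin n) : I.J.O {c} = I.Jcredits c := by
  simp [CA.O]; rfl

lemma O_pair {c c' : Fin n ⊕ Fin n} (h : c ≠ c') :
    I.J.O {c, c'} = I.Jcredits c + I.Jcredits c' := by
  show ∑ x ∈ ({c, c'} : Finset _), I.J.credits x = _
  rw [Finset.sum_pair h]; rfl

lemma O_empty : I.J.O (∅ : Finset (Fin n ⊕ Fin n)) = 0 := by simp [CA.O]

lemma card_le_O (D : Finset (Fin n ⊕ Fin n)) : (D.card : ℚ) ≤ I.J.O D := by
  rw [show I.J.O D = ∑ c ∈ D, I.Jcredits c from rfl]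
  calc (D.card : ℚ) = ∑ _c ∈ D, 1 := by simp
  _ ≤ ∑ c ∈ D, I.Jcredits c := Finset.sum_le_sum (fun c _ => I.one_le_Jcredits c)

lemma one_le_O_of_mem {D : Finset (Fin n ⊕ Fin n)} {c : Fin n ⊕ Fin n} (h : c ∈ D) :
    1 ≤ I.J.O D :=
  le_trans (I.one_le_Jcredits c)
    (Finset.single_le_sum (fun i _ => I.Jcredits_nonneg i) h)

lemma O_mono {D A : Finset (Fin n ⊕ Fin n)} (h : D ⊆ A) : I.J.O D ≤ I.J.O A :=
  Finset.sum_le_sum_of_subset_of_nonneg h (fun i _ _ => I.Jcredits_nonneg i)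

lemma eq_of_subset_of_O_eq {D A : Finset (Fin n ⊕ Fin n)} (h : D ⊆ A)
    (he : I.J.O D = I.J.O A) : D = A := by
  by_contra hne
  obtain ⟨c, hcA, hcD⟩ := Finset.exists_of_ssubset (lt_of_le_of_ne h hne)
  have h1 : I.J.O (insert c D) ≤ I.J.O A := I.O_mono (Finset.insert_subset hcA h)
  rw [show I.J.O (insert c D) = ∑ x ∈ insert c D, I.Jcredits x from rfl,
    Finset.sum_insert hcD] at h1
  have h2 := I.one_le_Jcredits c
  have : I.J.O D = ∑ x ∈ D, I.Jcredits x := rfl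
  rw [this] at he
  linarith [he]

end RSMTI
namespace RSMTI

variable {n : ℕ} (I : RSMTI n)

lemma forward (σ : Equiv.Perm (Fin n)) (hσ : I.CompleteWeaklyStable σ) :
    ∃ M : Finset (Fin n × (Fin n ⊕ Fin n)),
      I.J.IsMatching M ∧ I.J.StudentComplete M ∧ I.J.CoalitionStable noF M := by
  classical
  set M : Finset (Fin n × (Fin n ⊕ Fin n)) :=
    Finset.univ.filter
      (fun p => p.2 = Sum.inl (σ p.1) ∨ (I.des (σ p.1) ∧ p.2 = Sum.inr (σ p.1))) with hMdef
  have memM : ∀ s c, ((s, c) ∈ M) ↔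
      (c = Sum.inl (σ s) ∨ (I.des (σ s) ∧ c = Sum.inr (σ s))) := by
    intro s c; simp [hMdef]
  have hCMdes : ∀ s, I.des (σ s) → CM M s = {Sum.inl (σ s), Sum.inr (σ s)} := by
    intro s h; ext c
    rw [mem_CM', memM]
    simp [h]
  have hCMnd : ∀ s, ¬ I.des (σ s) → CM M s = {Sum.inl (σ s)} := by
    intro s h; ext c
    rw [mem_CM', memM]
    simp [h]
  have hOCM : ∀ s, I.J.O (CM M s) = 2 := by
    intro s
    by_cases h : I.des (σ s)
    · rw [hCMdes s h, I.O_pair (by simp), I.Jcredits_inl_des h]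
      norm_num [Jcredits]
    · rw [hCMnd s h, I.O_singleton, I.Jcredits_inl_not_des h]
  have hSMinl : ∀ j, SM M (Sum.inl j) = {σ.symm j} := by
    intro j; ext s
    rw [mem_SM', memM, Finset.mem_singleton]
    constructor
    · rintro (h | ⟨-, h⟩)
      · rw [Equiv.eq_symm_apply]; exact (Sum.inl.inj h).symm
      · exact absurd h (by simp)
    · rintro rfl
      exact Or.inl (by rw [Equiv.apply_symm_apply])
  have hSMinr : ∀ j, I.des j → SM M (Sum.inr j) = {σ.symm j} := by
    intro j hd; ext s
    rw [mem_SM', memM, Finset.mem_singleton]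
    constructor
    · rintro (h | ⟨hds, h⟩)
      · exact absurd h (by simp)
      · rw [Equiv.eq_symm_apply]; exact (Sum.inr.inj h).symm
    · rintro rfl
      rw [Equiv.apply_symm_apply]
      exact Or.inr ⟨hd, rfl⟩
  have hSMinr' : ∀ j, ¬ I.des j → SM M (Sum.inr j) = ∅ := by
    intro j hd
    ext s; rw [mem_SM', memM]
    simp only [Finset.notMem_empty, iff_false]
    rintro (h | ⟨hds, h⟩)
    · exact absurd h (by simp)
    · have := Sum.inr.inj h
      subst this
      exact hd hds
  have hmatch : I.J.IsMatching M := by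
    refine ⟨?_, ?_, ?_⟩
    · rintro ⟨s, c⟩ hp
      rw [memM] at hp
      rcases hp with rfl | ⟨hd, rfl⟩
      · exact hσ.1 s
      · exact ⟨hd, hσ.1 s⟩
    · intro s
      exact le_of_eq (hOCM s)
    · rintro (j | j)
      · rw [hSMinl j]
        simp [J_quota, Jquota]
      · by_cases hd : I.des j
        · rw [hSMinr j hd]
          simp [J_quota, Jquota, hd]
        · rw [hSMinr' j hd]
          simp
  refine ⟨M, hmatch, (fun s => hOCM s), ?_⟩
  rintro s B ⟨hBne, hBacc, hWants, D, hDsub, hpref, hODB, hbudget, -⟩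
  have hOCMs := hOCM s
  have hl : I.J.limit s = (2 : ℚ) := rfl
  rw [hl, hOCMs] at hbudget
  have hODeqB : I.J.O D = I.J.O B := le_antisymm hODB (by linarith)
  have hOBpos : 1 ≤ I.J.O B := by
    obtain ⟨c, hc⟩ := hBne
    exact I.one_le_O_of_mem hc
  have hDne : D.Nonempty := by
    rcases D.eq_empty_or_nonempty with rfl | h
    · rw [I.O_empty] at hODeqB; linarith
    · exact h
  have hkey : ∀ c ∈ B, 3 * I.wrank (σ s) ≤ I.Jrank c := by
    intro c hc
    by_contra hlt
    push_neg at hlt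
    have haccc := (hBacc c hc).1
    have hW := hWants c hc
    cases c with
    | inl k =>
      have hwk : I.wrank k < I.wrank (σ s) := by
        have := I.Joff_le_one k
        rw [I.Jrank_inl] at hlt; omega
      have hmr : I.mrank s < I.mrank (σ.symm k) := by
        rcases hW with hq | ⟨s', hs', hp⟩
        · rw [hSMinl k, Finset.card_singleton] at hq
          exact absurd hq (by norm_num [J_quota, Jquota])
        · rw [hSMinl k, Finset.mem_singleton] at hs'
          subst hs'
          exact ((I.cPref_iff).1 hp).2.2
      exact hσ.2 s k ⟨haccc, (fun h => by rw [h] at hwk; exact lt_irrefl _ hwk), hwk, hmr⟩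
    | inr k =>
      have hd := haccc.1
      have hwk : I.wrank k < I.wrank (σ s) := by
        rw [I.Jrank_inr] at hlt; omega
      have hmr : I.mrank s < I.mrank (σ.symm k) := by
        rcases hW with hq | ⟨s', hs', hp⟩
        · rw [hSMinr k hd, Finset.card_singleton] at hq
          exact absurd hq (by norm_num [J_quota, Jquota, hd])
        · rw [hSMinr k hd, Finset.mem_singleton] at hs'
          subst hs'
          exact ((I.cPref_iff).1 hp).2.2
      exact hσ.2 s k ⟨haccc.2, (fun h => by rw [h] at hwk; exact lt_irrefl _ hwk), hwk, hmr⟩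
  by_cases hd : I.des (σ s)
  · have hCM := hCMdes s hd
    by_cases hin : Sum.inl (σ s) ∈ D
    · obtain ⟨c, hc⟩ := hBne
      have h22 := ((I.sPref_iff).1 (hpref c hc _ hin)).2.2
      rw [I.Jrank_inl, if_pos hd] at h22
      have hk3 := hkey c hc
      omega
    · have hDsub' : D ⊆ {Sum.inr (σ s)} := by
        intro x hx
        have hx2 := hDsub hx
        rw [hCM] at hx2
        rcases Finset.mem_insert.1 hx2 with rfl | h
        · exact absurd hx hin
        · exact h
      have hDeq : D = {Sum.inr (σ s)} := by
        rcases Finset.subset_singleton_iff.1 hDsub' with rfl | h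
        · exact absurd hDne (by simp)
        · exact h
      have hOD1 : I.J.O D = 1 := by rw [hDeq, I.O_singleton]; rfl
      have hOB1 : I.J.O B = 1 := by rw [← hODeqB, hOD1]
      have hcard : B.card ≤ 1 := by
        have := I.card_le_O B
        rw [hOB1] at this
        exact_mod_cast this
      obtain ⟨c, hc⟩ := hBne
      have hBeq : B = {c} := by
        refine Finset.eq_singleton_iff_unique_mem.2 ⟨hc, ?_⟩
        intro x hx
        by_contra hne
        have : 1 < B.card := Finset.one_lt_card.2 ⟨x, hx, c, hc, hne⟩
        omega
      have hcred : I.Jcredits c = 1 := by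
        rw [hBeq, I.O_singleton] at hOB1
        exact hOB1
      have h22 := ((I.sPref_iff).1 (hpref c hc _
        (by rw [hDeq]; exact Finset.mem_singleton_self _))).2.2
      have hk3 := hkey c hc
      cases c with
      | inl k =>
        have hok := I.Joff_le_one k
        rw [I.Jrank_inl, I.Jrank_inr] at h22
        rw [I.Jrank_inl] at hk3
        have hwk : I.wrank (σ s) = I.wrank k := by omega
        rcases I.eq_or_eq_twin_of_wrank_eq hwk with rfl | rfl
        · exact (hBacc _ hc).2 ((memM s _).2 (Or.inl rfl))
        · rw [I.Jcredits_inl_not_des (I.not_des_twin hd)] at hcred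
          norm_num at hcred
      | inr k =>
        rw [I.Jrank_inr, I.Jrank_inr] at h22
        rw [I.Jrank_inr] at hk3
        omega
  · have hCM := hCMnd s hd
    have hDsub' : D ⊆ {Sum.inl (σ s)} := hCM ▸ hDsub
    have hDeq : D = {Sum.inl (σ s)} := by
      rcases Finset.subset_singleton_iff.1 hDsub' with rfl | h
      · exact absurd hDne (by simp)
      · exact h
    have hOD2 : I.J.O D = 2 := by
      rw [hDeq, I.O_singleton, I.Jcredits_inl_not_des hd]
    have hOB2 : I.J.O B = 2 := by rw [← hODeqB, hOD2]
    have hBsub : ∀ c ∈ B, c = Sum.inl (I.twin (σ s)) := by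
      intro c hc
      have h22 := ((I.sPref_iff).1 (hpref c hc _
        (by rw [hDeq]; exact Finset.mem_singleton_self _))).2.2
      have hk3 := hkey c hc
      rw [I.Jrank_inl, if_neg hd] at h22
      by_cases ht : I.twin (σ s) = σ s
      · rw [if_neg (fun h => h ht)] at h22
        exact absurd hk3 (by omega)
      · rw [if_pos ht] at h22
        cases c with
        | inl k =>
          have hok := I.Joff_le_one k
          rw [I.Jrank_inl] at h22 hk3
          have hwk : I.wrank (σ s) = I.wrank k := by omega
          rcases I.eq_or_eq_twin_of_wrank_eq hwk with rfl | rfl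
          · exact absurd ((memM s _).2 (Or.inl rfl)) (hBacc _ hc).2
          · rfl
        | inr k =>
          rw [I.Jrank_inr] at h22 hk3
          exact absurd hk3 (by omega)
    obtain ⟨c, hc⟩ := hBne
    have hceq := hBsub c hc
    by_cases ht : I.twin (σ s) = σ s
    · rw [ht] at hceq
      exact (hBacc c hc).2 (by rw [hceq]; exact (memM s _).2 (Or.inl rfl))
    · have hBeq : B = {Sum.inl (I.twin (σ s))} :=
        Finset.eq_singleton_iff_unique_mem.2 ⟨hceq ▸ hc, hBsub⟩
      rw [hBeq, I.O_singleton, I.Jcredits_inl_des (I.des_twin_of_ne ht hd)] at hOB2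
      norm_num at hOB2

end RSMTI
namespace RSMTI

variable {n : ℕ} (I : RSMTI n)

lemma quota_inl (j : Fin n) : I.J.quota (Sum.inl j) = 1 := rfl

lemma quota_inr {j : Fin n} (h : I.des j) : I.J.quota (Sum.inr j) = 1 := by
  rw [J_quota]
  simp [Jquota, h]

lemma three_wrank_le_Jrank (c : Fin n ⊕ Fin n) :
    3 * I.wrank (Sum.elim id id c) ≤ I.Jrank c := by
  cases c with
  | inl j =>
    simp only [Sum.elim_inl, id_eq]
    rw [I.Jrank_inl]
    exact Nat.le_add_right _ _
  | inr j =>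
    simp only [Sum.elim_inr, id_eq]
    rw [I.Jrank_inr]
    exact Nat.le_add_right _ _

lemma Jrank_le (c : Fin n ⊕ Fin n) :
    I.Jrank c ≤ 3 * I.wrank (Sum.elim id id c) + 2 := by
  cases c with
  | inl j =>
    simp only [Sum.elim_inl, id_eq]
    rw [I.Jrank_inl]
    have := I.Joff_le_one j
    omega
  | inr j =>
    simp only [Sum.elim_inr, id_eq]
    rw [I.Jrank_inr]

end RSMTI
namespace RSMTI

variable {n : ℕ} (I : RSMTI n)

lemma backward (M : Finset (Fin n × (Fin n ⊕ Fin n))) (hM : I.J.IsMatching M)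
    (hSC : I.J.StudentComplete M) (hCS : I.J.CoalitionStable noF M) :
    ∃ σ : Equiv.Perm (Fin n), I.CompleteWeaklyStable σ := by
  classical
  obtain ⟨haccM, hlimM, hquoM⟩ := hM
  have haccP : ∀ {s c}, (s, c) ∈ M → I.Jacc s c := fun h => haccM _ h
  have hO2 : ∀ s, I.J.O (CM M s) = 2 := fun s => hSC s
  have uniq : ∀ {c : Fin n ⊕ Fin n} {s s' : Fin n}, I.J.quota c = 1 →
      (s, c) ∈ M → (s', c) ∈ M → s = s' := by
    intro c s s' hq h h'
    by_contra hne
    have h1 : 1 < (SM M c).card :=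
      Finset.one_lt_card.2 ⟨s, mem_SM'.2 h, s', mem_SM'.2 h', hne⟩
    have h2 := hquoM c
    omega
  have two_mem : ∀ s c c', c ∈ CM M s → c' ∈ CM M s → c ≠ c' →
      I.Jcredits c = 1 ∧ I.Jcredits c' = 1 ∧ CM M s = {c, c'} := by
    intro s c c' hc hc' hne
    have hsub : ({c, c'} : Finset _) ⊆ CM M s := by
      intro x hx
      rcases Finset.mem_insert.1 hx with rfl | hx
      · exact hc
      · rw [Finset.mem_singleton] at hx; subst hx; exact hc'
    have h1 := I.O_mono hsub
    rw [hO2 s, I.O_pair hne] at h1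
    have l1 := I.one_le_Jcredits c
    have l2 := I.one_le_Jcredits c'
    have e1 : I.Jcredits c = 1 := by
      rcases I.Jcredits_eq_one_or_two c with h | h
      · exact h
      · linarith
    have e2 : I.Jcredits c' = 1 := by
      rcases I.Jcredits_eq_one_or_two c' with h | h
      · exact h
      · linarith
    refine ⟨e1, e2, (I.eq_of_subset_of_O_eq hsub ?_).symm⟩
    rw [hO2 s, I.O_pair hne, e1, e2]
    norm_num
  have womanDes : ∀ s c, c ∈ CM M s → I.Jcredits c = 1 → I.des (Sum.elim id id c) := by
    intro s c hc h1
    cases c with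
    | inl j =>
      by_contra hd
      simp only [Sum.elim_inl, id_eq] at hd
      rw [I.Jcredits_inl_not_des hd] at h1
      norm_num at h1
    | inr j => exact (haccP (mem_CM'.1 hc)).1
  -- the descent core
  have core : ∀ (s : Fin n) (j : Fin n) (c c' cstar : Fin n ⊕ Fin n),
      c ∈ CM M s → c' ∈ CM M s → CM M s = {c, c'} → I.Jcredits c' = 1 →
      I.Jacc s cstar → I.Jcredits cstar = 1 → I.J.quota cstar = 1 → I.J.quota c = 1 →
      I.Jrank cstar < I.Jrank c' → cstar ≠ c → Sum.elim id id cstar = j →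
      Sum.elim id id c' ≠ j → (∀ x, Sum.elim id id x = j → x = c ∨ x = cstar) →
      ∃ s₁, (∃ d ∈ CM M s₁, ∃ d' ∈ CM M s₁, Sum.elim id id d ≠ Sum.elim id id d') ∧
        I.mrank s₁ < I.mrank s := by
    intro s j c c' cstar hc hc' hCM h1' haccst hcr hq hqc hrk hnec hwcstar hne' hother
    have hnecstarc' : cstar ≠ c' := fun h => hne' (h ▸ hwcstar)
    have hcstarnotin : cstar ∉ CM M s := by
      rw [hCM]
      simp only [Finset.mem_insert, Finset.mem_singleton]
      rintro (h | h)
      · exact hnec h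
      · exact hnecstarc' h
    have hOs := hO2 s
    have haccc' : I.Jacc s c' := haccP (mem_CM'.1 hc')
    have hnw : ¬ I.J.Wants M s cstar := by
      intro hw
      refine hCS s {cstar} ⟨Finset.singleton_nonempty _, ?_, ?_, {c'}, ?_, ?_, ?_, ?_, trivial⟩
      · intro x hx
        rw [Finset.mem_singleton] at hx; subst hx
        exact ⟨haccst, fun hm => hcstarnotin (mem_CM'.2 hm)⟩
      · intro x hx
        rw [Finset.mem_singleton] at hx; subst hx
        exact hw
      · intro x hx
        rw [Finset.mem_singleton] at hx; subst hx
        exact hc'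
      · intro x hx c'' hc''
        rw [Finset.mem_singleton] at hx hc''
        subst hx; subst hc''
        exact (I.sPref_iff).2 ⟨haccst, haccc', hrk⟩
      · rw [I.O_singleton, I.O_singleton, hcr, h1']
      · rw [I.O_singleton, I.O_singleton, hcr, h1', hOs]
        norm_num [J_limit]
    rw [CA.Wants] at hnw
    push_neg at hnw
    obtain ⟨hnq, hnp⟩ := hnw
    rw [hq] at hnq
    have hcard : 0 < (SM M cstar).card := by omega
    obtain ⟨s₁, hs₁⟩ := Finset.card_pos.1 hcard
    have hs₁M : (s₁, cstar) ∈ M := mem_SM'.1 hs₁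
    have hs₁ne : s₁ ≠ s := fun h => hcstarnotin (mem_CM'.2 (h ▸ hs₁M))
    have hmlt : I.mrank s₁ < I.mrank s := by
      rcases lt_trichotomy (I.mrank s₁) (I.mrank s) with h | h | h
      · exact h
      · exact absurd (I.mrank_inj h) hs₁ne
      · exact absurd ((I.cPref_iff).2 ⟨haccst, haccP hs₁M, h⟩) (hnp s₁ hs₁)
    have hcs₁ : cstar ∈ CM M s₁ := mem_CM'.2 hs₁M
    have hOs₁ := hO2 s₁
    have hnsing : CM M s₁ ≠ {cstar} := by
      intro h
      rw [h, I.O_singleton, hcr] at hOs₁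
      norm_num at hOs₁
    obtain ⟨c₂, hc₂, hc₂ne⟩ : ∃ c₂ ∈ CM M s₁, c₂ ≠ cstar := by
      by_contra hall
      push_neg at hall
      exact hnsing (Finset.eq_singleton_iff_unique_mem.2 ⟨hcs₁, hall⟩)
    refine ⟨s₁, ⟨cstar, hcs₁, c₂, hc₂, ?_⟩, hmlt⟩
    intro heq
    rw [hwcstar] at heq
    rcases hother c₂ heq.symm with rfl | rfl
    · exact hs₁ne (uniq hqc (mem_CM'.1 hc₂) (mem_CM'.1 hc))
    · exact hc₂ne rfl
  have descent : ∀ (s : Fin n) (c c' : Fin n ⊕ Fin n),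
      c ∈ CM M s → c' ∈ CM M s → CM M s = {c, c'} →
      I.Jcredits c = 1 → I.Jcredits c' = 1 →
      I.wrank (Sum.elim id id c) < I.wrank (Sum.elim id id c') →
      ∃ s₁, (∃ d ∈ CM M s₁, ∃ d' ∈ CM M s₁, Sum.elim id id d ≠ Sum.elim id id d') ∧
        I.mrank s₁ < I.mrank s := by
    intro s c c' hc hc' hCM h1 h1' hlt
    have hdk : I.des (Sum.elim id id c) := womanDes s c hc h1
    have hrk' := I.three_wrank_le_Jrank c'
    have hne' : Sum.elim id id c' ≠ Sum.elim id id c := by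
      intro h
      rw [h] at hlt
      exact lt_irrefl _ hlt
    cases c with
    | inl j =>
      have hdk' : I.des j := hdk
      refine core s j (Sum.inl j) c' (Sum.inr j) hc hc' hCM h1'
        ⟨hdk', haccP (mem_CM'.1 hc)⟩ rfl (I.quota_inr hdk') (I.quota_inl j) ?_ (by simp) rfl
        hne' ?_
      · rw [I.Jrank_inr]
        simp only [Sum.elim_inl, id_eq] at hlt
        omega
      · rintro (a | a) h
        · exact Or.inl (by rw [show a = j from h])
        · exact Or.inr (by rw [show a = j from h])
    | inr j =>
      have hdk' : I.des j := hdk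
      refine core s j (Sum.inr j) c' (Sum.inl j) hc hc' hCM h1'
        (haccP (mem_CM'.1 hc)).2 (I.Jcredits_inl_des hdk') (I.quota_inl j) (I.quota_inr hdk')
        ?_ (by simp) rfl hne' ?_
      · rw [I.Jrank_inl]
        have := I.Joff_le_one j
        simp only [Sum.elim_inr, id_eq] at hlt
        omega
      · rintro (a | a) h
        · exact Or.inr (by rw [show a = j from h])
        · exact Or.inl (by rw [show a = j from h])
  have noBad : ∀ s, ¬ ∃ c ∈ CM M s, ∃ c' ∈ CM M s,
      Sum.elim id id c ≠ Sum.elim id id c' := by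
    by_contra hb
    push_neg at hb
    obtain ⟨s0, hs0⟩ := hb
    set V := Finset.univ.filter (fun s => ∃ c ∈ CM M s, ∃ c' ∈ CM M s,
        Sum.elim id id c ≠ Sum.elim id id c') with hV
    have hVne : V.Nonempty := ⟨s0, Finset.mem_filter.2 ⟨Finset.mem_univ _, hs0⟩⟩
    obtain ⟨s, hsV, hmin⟩ := Finset.exists_min_image V (fun s => I.mrank s) hVne
    obtain ⟨c, hc, c', hc', hww⟩ := (Finset.mem_filter.1 hsV).2
    have hne : c ≠ c' := fun h => hww (h ▸ rfl)
    obtain ⟨h1, h1', hCMs⟩ := two_mem s c c' hc hc' hne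
    have hdk := womanDes s c hc h1
    have hdl := womanDes s c' hc' h1'
    have hwne : I.wrank (Sum.elim id id c) ≠ I.wrank (Sum.elim id id c') := by
      intro h
      rcases I.eq_or_eq_twin_of_wrank_eq h with h2 | h2
      · exact hww h2.symm
      · exact I.not_des_twin hdk (h2 ▸ hdl)
    rcases lt_or_gt_of_ne hwne with hlt | hlt
    · obtain ⟨s₁, hb₁, hm₁⟩ := descent s c c' hc hc' hCMs h1 h1' hlt
      have hs₁V : s₁ ∈ V := Finset.mem_filter.2 ⟨Finset.mem_univ s₁, hb₁⟩
      exact absurd hm₁ (not_lt.2 (hmin s₁ hs₁V))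
    · obtain ⟨s₁, hb₁, hm₁⟩ := descent s c' c hc' hc (by rw [hCMs, Finset.pair_comm]) h1' h1 hlt
      have hs₁V : s₁ ∈ V := Finset.mem_filter.2 ⟨Finset.mem_univ s₁, hb₁⟩
      exact absurd hm₁ (not_lt.2 (hmin s₁ hs₁V))
  have bundle : ∀ s, (∃ k, ¬ I.des k ∧ CM M s = {Sum.inl k}) ∨
      (∃ k, I.des k ∧ CM M s = {Sum.inl k, Sum.inr k}) := by
    intro s
    have hOs := hO2 s
    have hne : (CM M s).Nonempty := by
      rcases (CM M s).eq_empty_or_nonempty with h | h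
      · rw [h, I.O_empty] at hOs; norm_num at hOs
      · exact h
    obtain ⟨c, hc⟩ := hne
    rcases I.Jcredits_eq_one_or_two c with h1 | h2
    · have hCMne : CM M s ≠ {c} := by
        intro h
        rw [h, I.O_singleton, h1] at hOs
        norm_num at hOs
      obtain ⟨c', hc', hcne⟩ : ∃ c' ∈ CM M s, c' ≠ c := by
        by_contra hall
        push_neg at hall
        exact hCMne (Finset.eq_singleton_iff_unique_mem.2 ⟨hc, hall⟩)
      obtain ⟨e1, e2, hCM⟩ := two_mem s c' c hc' hc hcne
      have hw : Sum.elim id id c' = Sum.elim id id c := by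
        by_contra hh
        exact noBad s ⟨c', hc', c, hc, hh⟩
      have hd := womanDes s c hc h1
      right
      refine ⟨Sum.elim id id c, hd, ?_⟩
      rw [hCM]
      cases c with
      | inl j =>
        cases c' with
        | inl j' => exact absurd (by rw [show j' = j from hw]) hcne
        | inr j' =>
          have hjj : j' = j := hw
          subst hjj
          exact Finset.pair_comm _ _
      | inr j =>
        cases c' with
        | inl j' =>
          have hjj : j' = j := hw
          subst hjj
          rfl
        | inr j' => exact absurd (by rw [show j' = j from hw]) hcne
    · left
      have hCM : CM M s = {c} := by
        refine (I.eq_of_subset_of_O_eq (Finset.singleton_subset_iff.2 hc) ?_).symm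
        rw [hO2 s, I.O_singleton, h2]
      cases c with
      | inl j =>
        refine ⟨j, ?_, hCM⟩
        intro hd
        rw [I.Jcredits_inl_des hd] at h2
        norm_num at h2
      | inr j =>
        rw [show I.Jcredits (Sum.inr j) = 1 from rfl] at h2
        norm_num at h2
  have hf : ∀ s, ∃ k, Sum.inl k ∈ CM M s := by
    intro s
    rcases bundle s with ⟨k, -, h⟩ | ⟨k, -, h⟩
    · exact ⟨k, by rw [h]; exact Finset.mem_singleton_self _⟩
    · exact ⟨k, by rw [h]; exact Finset.mem_insert_self _ _⟩
  choose f hfm using hf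
  have hfw : ∀ s j, Sum.inl j ∈ CM M s → j = f s := by
    intro s j hj
    have hj2 := hfm s
    rcases bundle s with ⟨k, -, h⟩ | ⟨k, -, h⟩
    · rw [h, Finset.mem_singleton] at hj hj2
      rw [Sum.inl.inj hj, Sum.inl.inj hj2]
    · rw [h] at hj hj2
      have e1 : j = k := by
        rcases Finset.mem_insert.1 hj with h' | h'
        · exact Sum.inl.inj h'
        · exact absurd (Finset.mem_singleton.1 h') (by simp)
      have e2 : f s = k := by
        rcases Finset.mem_insert.1 hj2 with h' | h'
        · exact Sum.inl.inj h'
        · exact absurd (Finset.mem_singleton.1 h') (by simp)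
      rw [e1, e2]
  have occ_inr : ∀ s' w', (s', Sum.inr w') ∈ M → f s' = w' := by
    intro s' w' hm
    have hmem := mem_CM'.2 hm
    rcases bundle s' with ⟨k, -, h⟩ | ⟨k, -, h⟩
    · rw [h, Finset.mem_singleton] at hmem
      exact absurd hmem (by simp)
    · rw [h] at hmem
      have hwk : w' = k := by
        rcases Finset.mem_insert.1 hmem with h' | h'
        · exact absurd h' (by simp)
        · exact Sum.inr.inj (Finset.mem_singleton.1 h')
      have hk : k = f s' := hfw s' k (by rw [h]; exact Finset.mem_insert_self _ _)
      rw [hwk]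
      exact hk.symm
  have hinj : Function.Injective f := by
    intro a b h
    exact uniq (I.quota_inl (f a)) (mem_CM'.1 (hfm a))
      (mem_CM'.1 (by rw [h]; exact hfm b))
  let σ : Equiv.Perm (Fin n) := Equiv.ofBijective f (Finite.injective_iff_bijective.1 hinj)
  have hσa : ∀ s, σ s = f s := fun s => rfl
  refine ⟨σ, fun m => ?_, ?_⟩
  · show I.acc m (σ m)
    rw [hσa m]
    exact (haccP (mem_CM'.1 (hfm m)) : I.Jacc m (Sum.inl (f m)))
  · rintro m w ⟨haw, hnew, hwlt, hmlt⟩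
    rw [hσa m] at hnew hwlt
    have hfs0 : f (σ.symm w) = w := by
      rw [← hσa (σ.symm w)]
      exact σ.apply_symm_apply w
    have hnej0 : w ≠ f m := fun h => hnew h.symm
    have hOm := hO2 m
    have hrkm : ∀ c' ∈ CM M m, 3 * I.wrank (f m) ≤ I.Jrank c' ∧ I.Jacc m c' := by
      intro c' hc'
      refine ⟨?_, haccP (mem_CM'.1 hc')⟩
      rcases bundle m with ⟨k, -, h⟩ | ⟨k, -, h⟩
      · have hk : k = f m := hfw m k (by rw [h]; exact Finset.mem_singleton_self _)
        rw [h, Finset.mem_singleton] at hc'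
        subst hc'
        rw [I.Jrank_inl, hk]
        exact Nat.le_add_right _ _
      · have hk : k = f m := hfw m k (by rw [h]; exact Finset.mem_insert_self _ _)
        rw [h] at hc'
        rcases Finset.mem_insert.1 hc' with rfl | h'
        · rw [I.Jrank_inl, hk]
          exact Nat.le_add_right _ _
        · rw [Finset.mem_singleton.1 h', I.Jrank_inr, hk]
          exact Nat.le_add_right _ _
    have hnotinl : (m, Sum.inl w) ∉ M := fun hm => hnej0 (hfw m w (mem_CM'.2 hm))
    have hnotinr : (m, Sum.inr w) ∉ M := fun hm => hnej0 ((occ_inr m w hm).symm)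
    have hWinl : I.J.Wants M m (Sum.inl w) := by
      have hs0m : (σ.symm w, Sum.inl w) ∈ M := by
        have h := hfm (σ.symm w)
        rw [hfs0] at h
        exact mem_CM'.1 h
      exact Or.inr ⟨σ.symm w, mem_SM'.2 hs0m, (I.cPref_iff).2 ⟨haw, haccP hs0m, hmlt⟩⟩
    have hWinr : I.des w → I.J.Wants M m (Sum.inr w) := by
      intro hdw
      rcases (SM M (Sum.inr w)).eq_empty_or_nonempty with he | ⟨s₁, hs₁⟩
      · left
        rw [he, Finset.card_empty, I.quota_inr hdw]
        norm_num
      · right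
        have hs₁M := mem_SM'.1 hs₁
        have hs₁eq : s₁ = σ.symm w := hinj (by rw [occ_inr s₁ w hs₁M, hfs0])
        refine ⟨s₁, hs₁, (I.cPref_iff).2 ⟨⟨hdw, haw⟩, haccP hs₁M, ?_⟩⟩
        rw [hs₁eq]
        exact hmlt
    by_cases hdw : I.des w
    · refine hCS m {Sum.inl w, Sum.inr w} ⟨⟨Sum.inl w, Finset.mem_insert_self _ _⟩,
        ?_, ?_, CM M m, Finset.Subset.refl _, ?_, ?_, ?_, trivial⟩
      · rintro c hc
        rcases Finset.mem_insert.1 hc with rfl | hc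
        · exact ⟨haw, hnotinl⟩
        · rw [Finset.mem_singleton] at hc; subst hc
          exact ⟨⟨hdw, haw⟩, hnotinr⟩
      · rintro c hc
        rcases Finset.mem_insert.1 hc with rfl | hc
        · exact hWinl
        · rw [Finset.mem_singleton] at hc; subst hc
          exact hWinr hdw
      · rintro c hc c' hc'
        obtain ⟨hr, ha⟩ := hrkm c' hc'
        refine (I.sPref_iff).2 ⟨?_, ha, ?_⟩
        · rcases Finset.mem_insert.1 hc with rfl | hc
          · exact haw
          · rw [Finset.mem_singleton] at hc; subst hc
            exact ⟨hdw, haw⟩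
        · have hle : I.Jrank c ≤ 3 * I.wrank w + 2 := by
            rcases Finset.mem_insert.1 hc with rfl | hc
            · exact I.Jrank_le (Sum.inl w)
            · rw [Finset.mem_singleton] at hc; subst hc
              exact I.Jrank_le (Sum.inr w)
          omega
      · have hOB : I.J.O {Sum.inl w, Sum.inr w} = 2 := by
          rw [I.O_pair (by simp), I.Jcredits_inl_des hdw]
          norm_num [Jcredits]
        rw [hOm, hOB]
      · have hOB : I.J.O {Sum.inl w, Sum.inr w} = 2 := by
          rw [I.O_pair (by simp), I.Jcredits_inl_des hdw]
          norm_num [Jcredits]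
        rw [hOm, hOB]
        norm_num [J_limit]
    · refine hCS m {Sum.inl w} ⟨Finset.singleton_nonempty _,
        ?_, ?_, CM M m, Finset.Subset.refl _, ?_, ?_, ?_, trivial⟩
      · rintro c hc
        rw [Finset.mem_singleton] at hc; subst hc
        exact ⟨haw, hnotinl⟩
      · rintro c hc
        rw [Finset.mem_singleton] at hc; subst hc
        exact hWinl
      · rintro c hc c' hc'
        rw [Finset.mem_singleton] at hc; subst hc
        obtain ⟨hr, ha⟩ := hrkm c' hc'
        refine (I.sPref_iff).2 ⟨haw, ha, ?_⟩
        have hle : I.Jrank (Sum.inl w) ≤ 3 * I.wrank w + 2 := I.Jrank_le (Sum.inl w)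
        omega
      · rw [hOm, I.O_singleton, I.Jcredits_inl_not_des hdw]
      · rw [hOm, I.O_singleton, I.Jcredits_inl_not_des hdw]
        norm_num [J_limit]

end RSMTI
/-- The restricted SMTI instance `I` admits a complete weakly stable
matching iff the CA-ML instance `J(I)` admits a student-complete coalition-stable
matching. -/
theorem completeWeaklyStable_iff_studentComplete_coalitionStable
    {n : ℕ} (I : RSMTI n) :
    (∃ σ : Equiv.Perm (Fin n), I.CompleteWeaklyStable σ) ↔
    ∃ M : Finset (Fin n × (Fin n ⊕ Fin n)),
      I.J.IsMatching M ∧ I.J.StudentComplete M ∧ I.J.CoalitionStable noF M := by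
  constructor
  · rintro ⟨σ, hσ⟩
    exact I.forward σ hσ
  · rintro ⟨M, hM, hSC, hCS⟩
    exact I.backward M hM hSC hCS
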